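/- arXiv:1202.6550 — 2 statements merged into one kernel-verified Lean document; each statement's English description precedes it below -/
import Mathlib

section
/- Let S_λ be a weighted shift on a directed tree 𝒯 = (V, E) with weights λ = {λ_v}_{v ∈ V°}, and let u, w ∈ V be such that Chi(u) = {w} and λ_w ≠ 0. Suppose u is a Stieltjes vertex with respect to S_λ. Then w is a Stieltjes vertex with respect to S_λ, and the map μ ↦ ρ_μ defined by ρ_μ(σ) = |λ_w|² ∫_σ (1/s) dμ(s) + (1 − |λ_w|² ∫_0^∞ (1/s) dμ(s)) δ₀(σ) for Borel σ ⊆ [0, ∞) is a bijection from M_w^b(λ) onto M_u(λ), whose inverse is the map ρ ↦ μ_ρ given by μ_ρ(σ) = |λ_w|^{−2} ∫_σ s dρ(s). Here M_w^b(λ) is the set of all representing measures μ of {‖S_λⁿ e_w‖²}_{n=0}^∞ such that ∫_0^∞ (1/s) dμ(s) ≤ 1/|λ_w|², M_u(λ) is the set of all representing measures of {‖S_λⁿ e_u‖²}_{n=0}^∞, and δ₀ is the Dirac measure at 0 on [0, ∞). -/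
open MeasureTheory ENNReal Set
open scoped Classical

noncomputable section

universe u

/-! ### Stieltjes moment sequences -/

/-- `μ` is a representing measure of the sequence `t`, i.e. a positive Borel measure on `[0,∞)`
(modelled as a Borel measure on `ℝ` vanishing on `(-∞,0)`) such that `∫_0^∞ sⁿ dμ(s) = t n`
for all `n`. -/
def IsRepMeasure (μ : Measure ℝ) (t : ℕ → ℝ) : Prop :=
  μ (Set.Iio 0) = 0 ∧ ∀ n : ℕ, ∫⁻ s, ENNReal.ofReal s ^ n ∂μ = ENNReal.ofReal (t n)

/-- `t` is a Stieltjes moment sequence. -/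
def IsStieltjesMomentSeq (t : ℕ → ℝ) : Prop :=
  (∀ n, 0 ≤ t n) ∧ ∃ μ : Measure ℝ, IsRepMeasure μ t

/-- `t` is a determinate Stieltjes moment sequence: it has exactly one representing measure. -/
def IsDeterminateStieltjes (t : ℕ → ℝ) : Prop :=
  (∀ n, 0 ≤ t n) ∧ ∃! μ : Measure ℝ, IsRepMeasure μ t

/-- a Borel probability measure on `[0,∞)` -/
def IsProbOnRplus (μ : Measure ℝ) : Prop := IsProbabilityMeasure μ ∧ μ (Set.Iio 0) = 0

/-! ### Unbounded operators -/

section Op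

variable {H : Type*} [NormedAddCommGroup H] [InnerProductSpace ℂ H]

/-- Apply a partially defined operator, with junk value `0` outside of the domain. -/
def pApply (S : H →ₗ.[ℂ] H) (x : H) : H := if h : x ∈ S.domain then S ⟨x, h⟩ else 0

/-- `x ∈ D^∞(S)`. -/
def MemDomInf (S : H →ₗ.[ℂ] H) (x : H) : Prop := ∀ n : ℕ, (pApply S)^[n] x ∈ S.domain

/-- The graph of the composition `A ∘ B` of two partially defined operators. -/
def graphComp (A B : H →ₗ.[ℂ] H) : Set (H × H) :=
  {p | ∃ y, (p.1, y) ∈ B.graph ∧ (y, p.2) ∈ A.graph}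

/-- A normal (unbounded) operator: closed, densely defined, and `N* N = N N*`
(as an equality of the graphs of the compositions). -/
def IsNormalOp {K : Type*} [NormedAddCommGroup K] [InnerProductSpace ℂ K] [CompleteSpace K]
    (N : K →ₗ.[ℂ] K) : Prop :=
  Dense (N.domain : Set K) ∧ N.IsClosed ∧
    graphComp N.adjoint N = graphComp N N.adjoint

/-- A densely defined operator `S` in a complex Hilbert space `H` is subnormal if there are a
complex Hilbert space `K`, an isometric embedding `J : H → K` and a normal operator `N` in `K`
extending `J ∘ S ∘ J⁻¹`. -/
def Subnormal {H : Type u} [NormedAddCommGroup H] [InnerProductSpace ℂ H]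
    (S : H →ₗ.[ℂ] H) : Prop :=
  Dense (S.domain : Set H) ∧
    ∃ (K : Type u) (_ : NormedAddCommGroup K) (_ : InnerProductSpace ℂ K) (_ : CompleteSpace K)
      (J : H →ₗᵢ[ℂ] K) (N : K →ₗ.[ℂ] K), IsNormalOp N ∧
        ∀ x : S.domain, ∃ hx : J x ∈ N.domain, N ⟨J x, hx⟩ = J (S x)

/-- `F` is a core of the operator `S`. -/
def IsCore (S : H →ₗ.[ℂ] H) (F : Submodule ℂ H) : Prop :=
  (F : Set H) ⊆ (S.domain : Set H) ∧
    (S.graph : Set (H × H)) ⊆ closure {p : H × H | p.1 ∈ F ∧ p.2 = pApply S p.1}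

end Op

/-! ### ℓ²-spaces and weighted shifts -/

instance : Fact ((1 : ℝ≥0∞) ≤ 2) := ⟨one_le_two⟩

/-- `ℓ²(V)`. -/
abbrev L2 (V : Type*) := lp (fun _ : V => ℂ) 2

section Shift

variable {V : Type*}

/-- the standard basis vector `e_u`, as a function on `V` -/
def eV (u : V) : V → ℂ := fun v => if v = u then 1 else 0

/-- The formal weighted-shift action determined by a partial "parent" function `p` and a weight
function `w` : `(Λ f)(v) = w v * f (parent of v)` if `v` has a parent, and `0` otherwise. -/
def lamOf (p : V → Option V) (w : V → ℂ) : (V → ℂ) →ₗ[ℂ] (V → ℂ) where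
  toFun f v := ((p v).map fun u => w v * f u).getD 0
  map_add' f g := by funext v; cases h : p v <;> simp [h, mul_add]
  map_smul' c f := by funext v; cases h : p v <;> simp [h]; ring

/-- `‖S^n e_u‖²` for the weighted shift with formal action `L`. -/
def momSeqL (L : (V → ℂ) →ₗ[ℂ] (V → ℂ)) (u : V) (n : ℕ) : ℝ :=
  ∑' v, ‖(⇑L)^[n] (eV u) v‖ ^ 2

/-- `e_u ∈ D^∞(S)` for the weighted shift with formal action `L`. -/
def eMemDomInf (L : (V → ℂ) →ₗ[ℂ] (V → ℂ)) (u : V) : Prop :=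
  ∀ n : ℕ, Memℓp ((⇑L)^[n] (eV u)) 2

/-- The (in general unbounded) operator in `ℓ²(V)` associated with the formal action `L`,
with its natural domain `{f ∈ ℓ²(V) : L f ∈ ℓ²(V)}`. -/
def pmOf (L : (V → ℂ) →ₗ[ℂ] (V → ℂ)) : L2 V →ₗ.[ℂ] L2 V where
  domain :=
    { carrier := {f : L2 V | Memℓp (L ⇑f) 2}
      add_mem' := by
        intro f g hf hg
        have h2 : L ⇑(f + g) = L ⇑f + L ⇑g := by
          rw [lp.coeFn_add, map_add]
        simpa only [Set.mem_setOf_eq, h2] using hf.add hg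
      zero_mem' := by
        have h2 : L ⇑(0 : L2 V) = 0 := by rw [lp.coeFn_zero, map_zero]
        simp only [Set.mem_setOf_eq, h2]
        exact zero_memℓp
      smul_mem' := by
        intro c f hf
        have h2 : L ⇑(c • f) = c • L ⇑f := by
          rw [lp.coeFn_smul, _root_.map_smul]
        simpa only [Set.mem_setOf_eq, h2] using hf.const_smul c }
  toFun :=
    { toFun := fun f => (⟨L ⇑(f : L2 V), f.2⟩ : L2 V)
      map_add' := by
        intro f g
        apply Subtype.ext
        have h2 : L ⇑((f : L2 V) + (g : L2 V)) = L ⇑(f : L2 V) + L ⇑(g : L2 V) := by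
          rw [lp.coeFn_add, map_add]
        simp only [Submodule.coe_add]
        rw [h2]
        rfl
      map_smul' := by
        intro c f
        apply Subtype.ext
        have h2 : L ⇑(c • (f : L2 V)) = c • L ⇑(f : L2 V) := by
          rw [lp.coeFn_smul, _root_.map_smul]
        simp only [Submodule.coe_smul]
        rw [h2]
        rfl }

end Shift
/-! ### Directed trees -/

/-- A directed tree: a directed graph which is connected (as an undirected graph), has no
circuits, and in which every vertex has at most one parent. -/
structure DirTree (V : Type*) where
  edge : V → V → Prop
  connected : ∀ u v : V, Relation.ReflTransGen (fun a b => edge a b ∨ edge b a) u v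
  noCircuit : ∀ v : V, ¬ Relation.TransGen edge v v
  uniqueParent : ∀ ⦃u₁ u₂ v : V⦄, edge u₁ v → edge u₂ v → u₁ = u₂

namespace DirTree

variable {V : Type*} (T : DirTree V)

/-- `v ∈ V°`, i.e. `v` is not a root. -/
def HasParent (v : V) : Prop := ∃ u, T.edge u v

/-- The parent of `v`, as an `Option`-valued function. -/
noncomputable def parOpt (v : V) : Option V :=
  if h : T.HasParent v then some h.choose else none

/-- The parent of `v` (junk value `v` itself if `v` is a root). -/
noncomputable def par (v : V) : V := (T.parOpt v).getD v

/-- The set of children of `u`. -/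
def Chi (u : V) : Set V := {v | T.edge u v}

/-- The set of descendants of `u`. -/
def Des (u : V) : Set V := {w | ∃ n : ℕ, T.par^[n] w = u}

/-- The formal action `Λ_T` of the weighted shift on `T` with weights `w`. -/
noncomputable def lamT (w : V → ℂ) : (V → ℂ) →ₗ[ℂ] (V → ℂ) := lamOf T.parOpt w

/-- The weighted shift `S_λ` on the directed tree `T`, as an unbounded operator in `ℓ²(V)`. -/
noncomputable def shift (w : V → ℂ) : L2 V →ₗ.[ℂ] L2 V := pmOf (T.lamT w)

/-- `u` is a Stieltjes vertex with respect to the weighted shift on `T` with weights `w`. -/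
noncomputable def StieltjesVertex (w : V → ℂ) (u : V) : Prop :=
  eMemDomInf (T.lamT w) u ∧ IsStieltjesMomentSeq (momSeqL (T.lamT w) u)

/-- The parent function of the subtree induced on a subset `A ⊆ V` : the parent of `v ∈ A`
inside `A`, if it exists. -/
noncomputable def parOptSub (A : Set V) (v : A) : Option A :=
  match T.parOpt v.1 with
  | none => none
  | some u => if h : u ∈ A then some ⟨u, h⟩ else none

/-- The restriction `S_λ|_{ℓ²(A)}` of a weighted shift to the (invariant) subspace `ℓ²(A)`,
regarded as an operator in the Hilbert space `ℓ²(A)`. -/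
noncomputable def shiftRes (w : V → ℂ) (A : Set V) : L2 A →ₗ.[ℂ] L2 A :=
  pmOf (lamOf (T.parOptSub A) fun v => w v.1)

end DirTree

/-! ### Classical weighted shifts -/

/-- parent function for the directed tree `(ℤ₊, {(n, n+1)})` of the unilateral shift -/
def uniPar : ℕ → Option ℕ
  | 0 => none
  | n + 1 => some n

/-- the formal action of the unilateral weighted shift: `(Λ f)(n+1) = λ_{n+1} f(n)`. -/
def uniLam (lam : ℕ → ℂ) : (ℕ → ℂ) →ₗ[ℂ] (ℕ → ℂ) := lamOf uniPar lam

/-- parent function for the directed tree `(ℤ, {(n, n+1)})` of the bilateral shift -/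
def bilPar : ℤ → Option ℤ := fun n => some (n - 1)

/-- the formal action of the bilateral weighted shift: `(Λ f)(n) = λ_n f(n-1)`. -/
def bilLam (lam : ℤ → ℂ) : (ℤ → ℂ) →ₗ[ℂ] (ℤ → ℂ) := lamOf bilPar lam

/-- `t` is a two-sided Stieltjes moment sequence: there is a positive Borel measure on `(0,∞)`
with `∫ sⁿ dμ = t n` for all `n ∈ ℤ`. -/
def IsTwoSidedStieltjesMomentSeq (t : ℤ → ℝ) : Prop :=
  (∀ n, 0 ≤ t n) ∧ ∃ μ : Measure ℝ,
    μ (Set.Iic 0) = 0 ∧ ∀ n : ℤ, ∫⁻ s, ENNReal.ofReal s ^ n ∂μ = ENNReal.ofReal (t n)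

/-! ### The directed trees `𝒯_{η,κ}` -/

/-- `J_ι = {k ∈ ℕ : 1 ≤ k ≤ ι}`, as a type. -/
abbrev Jt (ι : ℕ∞) := {k : ℕ // 1 ≤ k ∧ (k : ℕ∞) ≤ ι}

/-- The vertex set `V_{η,κ}` of the directed tree `𝒯_{η,κ}` :
`Sum.inl ⟨m, _⟩` is the vertex `-m` (for `m ∈ ℕ`, `m ≤ κ`) and `Sum.inr (i, j)` is the vertex
`(i, j)` (for `i ∈ J_η`, `j ≥ 1`). -/
abbrev VT (η κ : ℕ∞) := {m : ℕ // (m : ℕ∞) ≤ κ} ⊕ (Jt η × {j : ℕ // 1 ≤ j})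

/-- The parent function of the tree `𝒯_{η,κ}` : the parent of `-m` is `-(m+1)` (if `m+1 ≤ κ`;
the vertex `-κ` is the root), the parent of `(i,1)` is `0`, and the parent of `(i,j+1)`
is `(i,j)`. -/
def parEK (η κ : ℕ∞) : VT η κ → Option (VT η κ)
  | .inl ⟨m, _⟩ =>
      if h : ((m + 1 : ℕ) : ℕ∞) ≤ κ then some (.inl ⟨m + 1, h⟩) else none
  | .inr (i, ⟨j, _⟩) =>
      if h : 2 ≤ j then some (.inr (i, ⟨j - 1, by omega⟩))
      else some (.inl ⟨0, zero_le⟩)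

/-- The weight attached to a vertex of `𝒯_{η,κ}` : `lamC m` is the weight `λ_{-m}` and
`lamB i j` is the weight `λ_{i,j}`. -/
def wtEK {η κ : ℕ∞} (lamC : ℕ → ℂ) (lamB : Jt η → ℕ → ℂ) : VT η κ → ℂ
  | .inl ⟨m, _⟩ => lamC m
  | .inr (i, ⟨j, _⟩) => lamB i j

/-- The formal action of the weighted shift on `𝒯_{η,κ}` with weights `λ_{-m} = lamC m`,
`λ_{i,j} = lamB i j`. -/
def ekLam (η κ : ℕ∞) (lamC : ℕ → ℂ) (lamB : Jt η → ℕ → ℂ) :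
    (VT η κ → ℂ) →ₗ[ℂ] (VT η κ → ℂ) := lamOf (parEK η κ) (wtEK lamC lamB)

/-- The weighted shift `S_λ` on `𝒯_{η,κ}`, as an unbounded operator in `ℓ²(V_{η,κ})`. -/
def ekShift (η κ : ℕ∞) (lamC : ℕ → ℂ) (lamB : Jt η → ℕ → ℂ) :
    L2 (VT η κ) →ₗ.[ℂ] L2 (VT η κ) := pmOf (ekLam η κ lamC lamB)

/-- The branching vertex `0` of `𝒯_{η,κ}`. -/
def v0 (η κ : ℕ∞) : VT η κ := Sum.inl ⟨0, zero_le⟩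

/-- The vertex `-m` of `𝒯_{η,κ}`. -/
def vC (η : ℕ∞) {κ : ℕ∞} (m : ℕ) (hm : (m : ℕ∞) ≤ κ) : VT η κ := Sum.inl ⟨m, hm⟩

/-- The vertex `(i, j)` of `𝒯_{η,κ}`. -/
def vB {η : ℕ∞} (κ : ℕ∞) (i : Jt η) (j : ℕ) (hj : 1 ≤ j) : VT η κ := Sum.inr (i, ⟨j, hj⟩)

/-- The nonzero-weights condition for `𝒯_{η,κ}` : all weights attached to non-root vertices
are nonzero. -/
def ekNonzero (η κ : ℕ∞) (lamC : ℕ → ℂ) (lamB : Jt η → ℕ → ℂ) : Prop :=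
  (∀ m : ℕ, ((m + 1 : ℕ) : ℕ∞) ≤ κ → lamC m ≠ 0) ∧ ∀ (i : Jt η) (j : ℕ), 1 ≤ j → lamB i j ≠ 0

/-- `∫_0^∞ s^{-m} dμ(s)` (with values in `[0,∞]`, and the convention `0⁻¹ = ∞`). -/
def invMom (μ : Measure ℝ) (m : ℕ) : ℝ≥0∞ := ∫⁻ s, (ENNReal.ofReal s ^ m)⁻¹ ∂μ

/-- `∫_σ s^{-m} dμ(s)`. -/
def invMomOn (μ : Measure ℝ) (m : ℕ) (σ : Set ℝ) : ℝ≥0∞ := ∫⁻ s in σ, (ENNReal.ofReal s ^ m)⁻¹ ∂μ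

/-- `∫_0^∞ sⁿ dμ(s)`. -/
def powMom (μ : Measure ℝ) (n : ℕ) : ℝ≥0∞ := ∫⁻ s, ENNReal.ofReal s ^ n ∂μ

/-- `∫_σ sⁿ dμ(s)`. -/
def powMomOn (μ : Measure ℝ) (n : ℕ) (σ : Set ℝ) : ℝ≥0∞ := ∫⁻ s in σ, ENNReal.ofReal s ^ n ∂μ

/-- `|z|²` as an extended nonnegative real. -/
def nsq (z : ℂ) : ℝ≥0∞ := ENNReal.ofReal (‖z‖ ^ 2)

/-- `∑_{i ∈ J_η} |λ_{i,1}|² ∫_0^∞ s^{-m} dμ_i(s)`. -/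
def branchSum (η : ℕ∞) (lamB : Jt η → ℕ → ℂ) (μ : Jt η → Measure ℝ) (m : ℕ) : ℝ≥0∞ :=
  ∑' i : Jt η, nsq (lamB i 1) * invMom (μ i) m

/-- `∑_{i ∈ J_η} |λ_{i,1}|² ∫_σ s^{-m} dμ_i(s)`. -/
def branchSumOn (η : ℕ∞) (lamB : Jt η → ℕ → ℂ) (μ : Jt η → Measure ℝ) (m : ℕ) (σ : Set ℝ) :
    ℝ≥0∞ :=
  ∑' i : Jt η, nsq (lamB i 1) * invMomOn (μ i) m σ

/-- `{μ_i}_{i ∈ J_η}` is a system of Borel probability measures on `[0,∞)` satisfying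
`∫_0^∞ sⁿ dμ_i(s) = |λ_{i,2} ⋯ λ_{i,n+1}|²` for all `n ≥ 1` (condition (3.1) of the theorem). -/
def ekMomCond (η : ℕ∞) (lamB : Jt η → ℕ → ℂ) (μ : Jt η → Measure ℝ) : Prop :=
  (∀ i, IsProbOnRplus (μ i)) ∧
    ∀ (i : Jt η) (n : ℕ), 1 ≤ n →
      powMom (μ i) n = ENNReal.ofReal (‖∏ j ∈ Finset.Icc 2 (n + 1), lamB i j‖ ^ 2)

/-- `|λ_0 λ_{-1} ⋯ λ_{-(l-1)}|²` as an extended nonnegative real. -/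
def chainProdSq (lamC : ℕ → ℂ) (l : ℕ) : ℝ≥0∞ := nsq (∏ j ∈ Finset.range l, lamC j)

/-- The sequence `n ↦ ∑_{i ∈ J_η} |λ_{i,1} ⋯ λ_{i,n+1}|²` (which equals `‖S_λ^{n+1} e_0‖²`). -/
def ekBaseSeq (η : ℕ∞) (lamB : Jt η → ℕ → ℂ) (n : ℕ) : ℝ :=
  ∑' i : Jt η, ‖∏ j ∈ Finset.Icc 1 (n + 1), lamB i j‖ ^ 2

/-- The set of children of a vertex of `𝒯_{η,κ}`. -/
def ekChi (η κ : ℕ∞) (u : VT η κ) : Set (VT η κ) := {v | parEK η κ v = some u}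

/-!
Since `w` is the only child of `u`, `S e_u = λ_w e_w`, hence
`‖S^{n+1} e_u‖² = |λ_w|² ‖S^n e_w‖²`. So multiplying a representing measure `ρ` of the
`u`-sequence by `s / |λ_w|²` gives one of the `w`-sequence. Conversely, multiplying a
representing measure `μ` of the `w`-sequence by `|λ_w|² / s` shifts its moments back; the result
has the right total mass `1` after adding an atom at `0`, which is possible exactly when
`|λ_w|² ∫ 1/s dμ ≤ 1`. The atom is invisible to `s dρ`, and `μ` has no atom at `0` because
`∫ 1/s dμ < ∞`, so the two maps are mutually inverse.
-/

namespace DirTree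

variable {V : Type*} (T : DirTree V)

lemma parOpt_eq_some_iff {p v : V} : T.parOpt v = some p ↔ T.edge p v := by
  unfold parOpt
  constructor
  · intro h
    split at h
    · next hp =>
      obtain rfl : hp.choose = p := by simpa using h
      exact hp.choose_spec
    · simp at h
  · intro h
    have hp : T.HasParent v := ⟨p, h⟩
    rw [dif_pos hp]
    exact congrArg some (T.uniqueParent hp.choose_spec h)

lemma lamT_eV_apply (lam : V → ℂ) (u v : V) :
    T.lamT lam (eV u) v = if T.edge u v then lam v else 0 := by
  change ((T.parOpt v).map fun p => lam v * eV u p).getD 0 = _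
  cases h : T.parOpt v with
  | none =>
    have huv : ¬ T.edge u v := fun huv => by simp [(T.parOpt_eq_some_iff).2 huv] at h
    simp [huv]
  | some p =>
    rw [T.parOpt_eq_some_iff] at h
    by_cases hpu : p = u
    · subst hpu
      simp [h, eV]
    · have huv : ¬ T.edge u v := fun huv => hpu (T.uniqueParent h huv)
      simp [huv, eV, hpu]

lemma lamT_eV_of_chi_eq_singleton {lam : V → ℂ} {u w : V} (hchi : T.Chi u = {w}) :
    T.lamT lam (eV u) = lam w • eV w := by
  funext v
  have hedge : T.edge u v ↔ v = w := Set.ext_iff.1 hchi v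
  rw [lamT_eV_apply, hedge]
  by_cases hvw : v = w <;> simp [hvw, eV]

end DirTree

section MomentSeq

variable {V : Type*} (L : (V → ℂ) →ₗ[ℂ] (V → ℂ)) {u w : V} {a : ℂ}

lemma momSeqL_zero (u : V) : momSeqL L u 0 = 1 := by
  rw [momSeqL, Function.iterate_zero, id_eq, tsum_eq_single u (fun v hv => by simp [eV, hv])]
  simp [eV]

lemma momSeqL_nonneg (u : V) (n : ℕ) : 0 ≤ momSeqL L u n :=
  tsum_nonneg fun _ => by positivity

lemma iterate_succ_eV_of_apply_eV (hL : L (eV u) = a • eV w) (n : ℕ) :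
    (⇑L)^[n + 1] (eV u) = a • (⇑L)^[n] (eV w) := by
  rw [Function.iterate_succ_apply, hL, ← Module.End.pow_apply, map_smul, Module.End.pow_apply]

lemma momSeqL_succ_of_apply_eV (hL : L (eV u) = a • eV w) (n : ℕ) :
    momSeqL L u (n + 1) = ‖a‖ ^ 2 * momSeqL L w n := by
  simp only [momSeqL, iterate_succ_eV_of_apply_eV L hL, Pi.smul_apply, smul_eq_mul, norm_mul,
    mul_pow, tsum_mul_left]

lemma eMemDomInf_of_apply_eV (hL : L (eV u) = a • eV w) (ha : a ≠ 0)
    (hu : eMemDomInf L u) : eMemDomInf L w := by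
  intro n
  have h := (hu (n + 1)).const_smul a⁻¹
  rwa [iterate_succ_eV_of_apply_eV L hL, smul_smul, inv_mul_cancel₀ ha, one_smul] at h

end MomentSeq

/- With `c = |λ_w|²`, `upMeasure c μ` is the paper's `ρ_μ`, `downMeasure c ρ` is `μ_ρ`. -/
def upMeasure (c : ℝ≥0∞) (μ : Measure ℝ) : Measure ℝ :=
  μ.withDensity (fun s => c * (ENNReal.ofReal s)⁻¹) + (1 - c * invMom μ 1) • Measure.dirac 0

def downMeasure (c : ℝ≥0∞) (ρ : Measure ℝ) : Measure ℝ :=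
  ρ.withDensity fun s => c⁻¹ * ENNReal.ofReal s

section MomentShift

variable {c : ℝ≥0∞} {t t' : ℕ → ℝ} {μ ρ : Measure ℝ}

lemma measurable_mul_inv_ofReal (c : ℝ≥0∞) :
    Measurable fun s : ℝ => c * (ENNReal.ofReal s)⁻¹ := by
  fun_prop

lemma measurable_mul_ofReal (c : ℝ≥0∞) : Measurable fun s : ℝ => c * ENNReal.ofReal s := by
  fun_prop

lemma IsRepMeasure.measure_univ (hρ : IsRepMeasure ρ t) : ρ univ = ENNReal.ofReal (t 0) := by
  simpa using hρ.2 0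

lemma ae_pos_of_invMom_ne_top (h : invMom μ 1 ≠ ∞) : ∀ᵐ s ∂μ, 0 < s := by
  filter_upwards [ae_lt_top (ENNReal.measurable_ofReal.pow_const 1).inv h] with s hs
  simpa using hs

lemma lintegral_mul_inv_ofReal (c : ℝ≥0∞) (μ : Measure ℝ) :
    ∫⁻ s, c * (ENNReal.ofReal s)⁻¹ ∂μ = c * invMom μ 1 := by
  simp only [invMom, pow_one]
  exact lintegral_const_mul _ (by fun_prop)

lemma invDensity_mul_density (hc0 : c ≠ 0) (hctop : c ≠ ∞) :
    ((fun s : ℝ => c * (ENNReal.ofReal s)⁻¹) * fun s => c⁻¹ * ENNReal.ofReal s) =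
      (Ioi 0).indicator 1 := by
  funext s
  by_cases hs : 0 < s
  · have hx : ENNReal.ofReal s ≠ 0 := by simpa using hs
    rw [Pi.mul_apply, indicator_of_mem (mem_Ioi.2 hs), mul_mul_mul_comm,
      ENNReal.mul_inv_cancel hc0 hctop, ENNReal.inv_mul_cancel hx ENNReal.ofReal_ne_top, one_mul,
      Pi.one_apply]
  · simp [hs, ENNReal.ofReal_of_nonpos (not_lt.1 hs), hc0]

lemma downMeasure_withDensity_inv (hc0 : c ≠ 0) (hctop : c ≠ ∞) (μ : Measure ℝ) :
    downMeasure c (μ.withDensity fun s => c * (ENNReal.ofReal s)⁻¹) = μ.restrict (Ioi 0) := by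
  rw [downMeasure, ← withDensity_mul _ (measurable_mul_inv_ofReal c)
    (measurable_mul_ofReal c⁻¹), invDensity_mul_density hc0 hctop,
    withDensity_indicator_one measurableSet_Ioi]

lemma withDensity_inv_downMeasure (hc0 : c ≠ 0) (hctop : c ≠ ∞) (ρ : Measure ℝ) :
    (downMeasure c ρ).withDensity (fun s => c * (ENNReal.ofReal s)⁻¹) =
      ρ.restrict (Ioi 0) := by
  rw [downMeasure, ← withDensity_mul _ (measurable_mul_ofReal c⁻¹)
    (measurable_mul_inv_ofReal c), mul_comm, invDensity_mul_density hc0 hctop,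
    withDensity_indicator_one measurableSet_Ioi]

lemma mul_invMom_downMeasure (hc0 : c ≠ 0) (hctop : c ≠ ∞) (ρ : Measure ℝ) :
    c * invMom (downMeasure c ρ) 1 = ρ (Ioi 0) := by
  rw [← lintegral_mul_inv_ofReal, ← Measure.restrict_univ (μ := downMeasure c ρ),
    ← withDensity_apply _ MeasurableSet.univ, withDensity_inv_downMeasure hc0 hctop,
    Measure.restrict_apply_univ]

lemma lintegral_pow_downMeasure (c : ℝ≥0∞) (ρ : Measure ℝ) (n : ℕ) :
    ∫⁻ s, ENNReal.ofReal s ^ n ∂(downMeasure c ρ) =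
      c⁻¹ * ∫⁻ s, ENNReal.ofReal s ^ (n + 1) ∂ρ := by
  rw [downMeasure, lintegral_withDensity_eq_lintegral_mul _ (measurable_mul_ofReal c⁻¹)
    (ENNReal.measurable_ofReal.pow_const n), ← lintegral_const_mul _
    (ENNReal.measurable_ofReal.pow_const _)]
  simp only [Pi.mul_apply, pow_succ', mul_assoc]

lemma IsRepMeasure.downMeasure (hc0 : c ≠ 0) (hctop : c ≠ ∞)
    (hrel : ∀ n, ENNReal.ofReal (t (n + 1)) = c * ENNReal.ofReal (t' n))
    (hρ : IsRepMeasure ρ t) : IsRepMeasure (downMeasure c ρ) t' := by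
  refine ⟨?_, fun n => ?_⟩
  · rw [_root_.downMeasure, withDensity_apply _ measurableSet_Iio]
    exact setLIntegral_measure_zero _ _ hρ.1
  · rw [lintegral_pow_downMeasure, hρ.2, hrel, ← mul_assoc, ENNReal.inv_mul_cancel hc0 hctop,
      one_mul]

lemma invMom_downMeasure_le (hc0 : c ≠ 0) (hctop : c ≠ ∞) (hρ1 : ρ univ = 1) :
    invMom (downMeasure c ρ) 1 ≤ c⁻¹ := by
  rw [ENNReal.le_inv_iff_mul_le, mul_comm, mul_invMom_downMeasure hc0 hctop, ← hρ1]
  exact measure_mono (subset_univ _)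

lemma upMeasure_univ (hI : c * invMom μ 1 ≤ 1) : upMeasure c μ univ = 1 := by
  rw [upMeasure, Measure.add_apply, withDensity_apply _ MeasurableSet.univ, Measure.restrict_univ,
    lintegral_mul_inv_ofReal]
  simp [add_tsub_cancel_of_le hI]

lemma upMeasure_Iio_zero (hμ : μ (Iio 0) = 0) : upMeasure c μ (Iio 0) = 0 := by
  rw [upMeasure, Measure.add_apply, withDensity_apply _ measurableSet_Iio,
    setLIntegral_measure_zero _ _ hμ]
  simp

lemma lintegral_pow_succ_upMeasure (hμ : ∀ᵐ s ∂μ, 0 < s) (n : ℕ) :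
    ∫⁻ s, ENNReal.ofReal s ^ (n + 1) ∂(upMeasure c μ) =
      c * ∫⁻ s, ENNReal.ofReal s ^ n ∂μ := by
  rw [upMeasure, lintegral_add_measure, lintegral_smul_measure,
    lintegral_dirac' _ (ENNReal.measurable_ofReal.pow_const _),
    lintegral_withDensity_eq_lintegral_mul _ (measurable_mul_inv_ofReal c)
      (ENNReal.measurable_ofReal.pow_const _),
    ← lintegral_const_mul _ (ENNReal.measurable_ofReal.pow_const _)]
  simp only [ENNReal.ofReal_zero, ne_eq, add_eq_zero, one_ne_zero, and_false, not_false_eq_true,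
    zero_pow, smul_zero, add_zero]
  refine lintegral_congr_ae ?_
  filter_upwards [hμ] with s hs
  have hx : ENNReal.ofReal s ≠ 0 := by simpa using hs
  rw [Pi.mul_apply, pow_succ', mul_assoc, ← mul_assoc _ (ENNReal.ofReal s),
    ENNReal.inv_mul_cancel hx ENNReal.ofReal_ne_top, one_mul]

lemma IsRepMeasure.upMeasure (hc0 : c ≠ 0) (ht0 : t 0 = 1)
    (hrel : ∀ n, ENNReal.ofReal (t (n + 1)) = c * ENNReal.ofReal (t' n))
    (hμ : IsRepMeasure μ t') (hI : invMom μ 1 ≤ c⁻¹) : IsRepMeasure (upMeasure c μ) t := by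
  have hpos : ∀ᵐ s ∂μ, 0 < s := ae_pos_of_invMom_ne_top (ne_top_of_le_ne_top (by simpa) hI)
  refine ⟨upMeasure_Iio_zero hμ.1, fun n => ?_⟩
  cases n with
  | zero =>
    simpa [ht0] using upMeasure_univ ((mul_le_mul_right hI c).trans (ENNReal.mul_inv_le_one c))
  | succ n => rw [lintegral_pow_succ_upMeasure hpos, hμ.2, hrel]

lemma downMeasure_upMeasure (hc0 : c ≠ 0) (hctop : c ≠ ∞) (hμ : ∀ᵐ s ∂μ, 0 < s) :
    downMeasure c (upMeasure c μ) = μ := by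
  have hdirac : downMeasure c ((1 - c * invMom μ 1) • Measure.dirac (0 : ℝ)) = 0 := by
    simp [downMeasure, withDensity_smul_measure, dirac_withDensity]
  rw [upMeasure, downMeasure, withDensity_add_measure, ← downMeasure, ← downMeasure, hdirac,
    add_zero, downMeasure_withDensity_inv hc0 hctop]
  exact Measure.restrict_eq_self_of_ae_mem hμ

lemma upMeasure_downMeasure (hc0 : c ≠ 0) (hctop : c ≠ ∞) (hρ : ρ (Iio 0) = 0)
    (hρ1 : ρ univ = 1) : upMeasure c (downMeasure c ρ) = ρ := by
  have hsplit : ρ {0} + ρ (Ioi 0) = 1 := by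
    rw [← measure_union (by simp) measurableSet_Ioi, singleton_union, Ioi_insert, ← hρ1,
      ← compl_Iio, measure_compl measurableSet_Iio (by simp [hρ]), hρ, tsub_zero]
  have hmass : 1 - c * invMom (downMeasure c ρ) 1 = ρ {0} := by
    rw [mul_invMom_downMeasure hc0 hctop, ← hsplit,
      ENNReal.add_sub_cancel_right (measure_ne_top_of_subset (subset_univ _) (by simp [hρ1]))]
  rw [upMeasure, withDensity_inv_downMeasure hc0 hctop, hmass, ← Measure.restrict_singleton,
    ← Measure.restrict_union (by simp) (measurableSet_singleton 0), Ioi_union_left]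
  refine Measure.restrict_eq_self_of_ae_mem (ae_iff.2 ?_)
  simp only [mem_Ici, not_le]
  exact hρ

lemma mapsTo_upMeasure (hc0 : c ≠ 0) (ht0 : t 0 = 1)
    (hrel : ∀ n, ENNReal.ofReal (t (n + 1)) = c * ENNReal.ofReal (t' n)) :
    MapsTo (upMeasure c) {μ | IsRepMeasure μ t' ∧ invMom μ 1 ≤ c⁻¹}
      {ρ | IsRepMeasure ρ t} :=
  fun _ hμ => hμ.1.upMeasure hc0 ht0 hrel hμ.2

lemma mapsTo_downMeasure (hc0 : c ≠ 0) (hctop : c ≠ ∞) (ht0 : t 0 = 1)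
    (hrel : ∀ n, ENNReal.ofReal (t (n + 1)) = c * ENNReal.ofReal (t' n)) :
    MapsTo (downMeasure c) {ρ | IsRepMeasure ρ t}
      {μ | IsRepMeasure μ t' ∧ invMom μ 1 ≤ c⁻¹} :=
  fun _ hρ => ⟨hρ.downMeasure hc0 hctop hrel,
    invMom_downMeasure_le hc0 hctop (by rw [hρ.measure_univ, ht0, ENNReal.ofReal_one])⟩

lemma invOn_downMeasure_upMeasure (hc0 : c ≠ 0) (hctop : c ≠ ∞) (ht0 : t 0 = 1) :
    InvOn (downMeasure c) (upMeasure c) {μ | IsRepMeasure μ t' ∧ invMom μ 1 ≤ c⁻¹}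
      {ρ | IsRepMeasure ρ t} :=
  ⟨fun _ hμ => downMeasure_upMeasure hc0 hctop
      (ae_pos_of_invMom_ne_top (ne_top_of_le_ne_top (by simpa) hμ.2)),
    fun _ hρ => upMeasure_downMeasure hc0 hctop hρ.1
      (by rw [hρ.measure_univ, ht0, ENNReal.ofReal_one])⟩

end MomentShift

/-- Lemma 2(i). -/
theorem weightedShift_singleChild_repMeasure_bijOn
    {V : Type} (T : DirTree V) (lam : V → ℂ) (u w : V)
    (hchi : T.Chi u = {w}) (hw : lam w ≠ 0)
    (hu : T.StieltjesVertex lam u) :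
    T.StieltjesVertex lam w ∧
      Set.BijOn
        (fun μ : Measure ℝ =>
          μ.withDensity (fun s => nsq (lam w) * (ENNReal.ofReal s)⁻¹) +
            (1 - nsq (lam w) * invMom μ 1) • Measure.dirac (0 : ℝ))
        {μ : Measure ℝ | IsRepMeasure μ (momSeqL (T.lamT lam) w) ∧
          invMom μ 1 ≤ (nsq (lam w))⁻¹}
        {ρ : Measure ℝ | IsRepMeasure ρ (momSeqL (T.lamT lam) u)} ∧
      Set.InvOn
        (fun ρ : Measure ℝ => ρ.withDensity fun s => (nsq (lam w))⁻¹ * ENNReal.ofReal s)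
        (fun μ : Measure ℝ =>
          μ.withDensity (fun s => nsq (lam w) * (ENNReal.ofReal s)⁻¹) +
            (1 - nsq (lam w) * invMom μ 1) • Measure.dirac (0 : ℝ))
        {μ : Measure ℝ | IsRepMeasure μ (momSeqL (T.lamT lam) w) ∧
          invMom μ 1 ≤ (nsq (lam w))⁻¹}
        {ρ : Measure ℝ | IsRepMeasure ρ (momSeqL (T.lamT lam) u)} := by
  have hL := T.lamT_eV_of_chi_eq_singleton (lam := lam) hchi
  have hc0 : nsq (lam w) ≠ 0 := by simpa [nsq] using hw
  have hctop : nsq (lam w) ≠ ∞ := ENNReal.ofReal_ne_top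
  have ht0 := momSeqL_zero (T.lamT lam) u
  have hrel (n : ℕ) : ENNReal.ofReal (momSeqL (T.lamT lam) u (n + 1)) =
      nsq (lam w) * ENNReal.ofReal (momSeqL (T.lamT lam) w n) := by
    rw [momSeqL_succ_of_apply_eV _ hL, ENNReal.ofReal_mul (by positivity), nsq]
  have hInv := invOn_downMeasure_upMeasure hc0 hctop ht0 (t' := momSeqL (T.lamT lam) w)
  obtain ⟨ρ₀, hρ₀⟩ := hu.2.2
  exact ⟨⟨eMemDomInf_of_apply_eV _ hL hw hu.1, momSeqL_nonneg _ w, _,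
      hρ₀.downMeasure hc0 hctop hrel⟩,
    hInv.bijOn (mapsTo_upMeasure hc0 ht0 hrel) (mapsTo_downMeasure hc0 hctop ht0 hrel), hInv⟩
end
end

section
/- Let 0 < κ < ∞, let η ∈ {2, 3, …} ∪ {∞}, let {λ_{i,1}}_{i∈J_η} and {λ_{−j}}_{j=0}^{κ−1} be nonzero complex numbers, and let {μ_i}_{i∈J_η} be a sequence of Borel probability measures on [0, ∞). Then the following two conditions are equivalent: (A) ∑_{i∈J_η} |λ_{i,1}|² ∫_0^∞ (1/s) dμ_i(s) = 1, |∏_{j=0}^{l−1} λ_{−j}|² ∑_{i∈J_η} |λ_{i,1}|² ∫_0^∞ s^{−(l+1)} dμ_i(s) = 1 for every l ∈ J_{κ−1}, and |∏_{j=0}^{κ−1} λ_{−j}|² ∑_{i∈J_η} |λ_{i,1}|² ∫_0^∞ s^{−(κ+1)} dμ_i(s) ≤ 1; (B) there exists a Borel probability measure ν on [0, ∞) such that ∫_0^∞ sⁿ dν(s) = |∏_{j=κ−n}^{κ−1} λ_{−j}|² for every n ∈ J_κ and ∫_σ s^κ dν(s) = |∏_{j=0}^{κ−1} λ_{−j}|²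 ∑_{i∈J_η} |λ_{i,1}|² ∫_σ (1/s) dμ_i(s) for every Borel subset σ of [0, ∞). -/
open MeasureTheory ENNReal Set
open scoped Classical

noncomputable section

universe u

/-!
With `ρ = ∑ᵢ |λ_{i,1}|² μᵢ` and `K = |λ_0 ⋯ λ_{-(κ-1)}|²`, the set condition in (B) says
`s^κ dν = K s⁻¹ dρ`. Integrating `s^{n-κ}` against this identity turns the `n`-th moment of `ν`
into `K ∫ s^{-(κ-n+1)} dρ`; after cancelling the nonzero factor `|λ_{-(κ-n)} ⋯ λ_{-(κ-1)}|²` this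
is the equation of (A) with `l = κ - n`. Integrating `s^{-κ}` gives the inequality of (A), since
`s^κ s^{-κ} ≤ 1` and `ν` is a probability measure.
Conversely, `ν = K s^{-(κ+1)} dρ + (1 - K ∫ s^{-(κ+1)} dρ) δ₀` works: the inequality makes the
atom nonnegative, `s^κ dν` does not see it because `κ ≥ 1`, and `ρ` has no mass on `(-∞, 0]`
because `∫ s⁻¹ dρ = 1` is finite.
-/

lemma lintegral_sum_smul_measure {α ι : Type*} [MeasurableSpace α] (w : ι → ℝ≥0∞)
    (μ : ι → Measure α) (f : α → ℝ≥0∞) :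
    ∫⁻ s, f s ∂Measure.sum (fun i => w i • μ i) = ∑' i, w i * ∫⁻ s, f s ∂μ i := by
  simp only [lintegral_sum_measure, lintegral_smul_measure, smul_eq_mul]

lemma tsum_mul_invMom {ι : Type*} (w : ι → ℝ≥0∞) (μ : ι → Measure ℝ) (m : ℕ) :
    ∑' i, w i * invMom (μ i) m = invMom (Measure.sum fun i => w i • μ i) m :=
  (lintegral_sum_smul_measure w μ _).symm

lemma tsum_mul_invMomOn {ι : Type*} [Countable ι] (w : ι → ℝ≥0∞) (μ : ι → Measure ℝ) (m : ℕ)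
    (σ : Set ℝ) :
    ∑' i, w i * invMomOn (μ i) m σ = invMomOn (Measure.sum fun i => w i • μ i) m σ := by
  simp only [invMomOn, Measure.restrict_sum_of_countable, Measure.restrict_smul,
    lintegral_sum_smul_measure]

lemma nsq_mul (z w : ℂ) : nsq (z * w) = nsq z * nsq w := by
  rw [nsq, nsq, nsq, ← ENNReal.ofReal_mul (by positivity), norm_mul, mul_pow]

@[simp]
lemma nsq_one : nsq 1 = 1 := by
  simp [nsq]

lemma nsq_ne_zero {z : ℂ} (hz : z ≠ 0) : nsq z ≠ 0 := by
  simpa [nsq] using hz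

lemma nsq_prod_range_eq_mul (c : ℕ → ℂ) {l κ : ℕ} (hl : l ≤ κ) (hκ : 1 ≤ κ) :
    nsq (∏ j ∈ Finset.range κ, c j) =
      nsq (∏ j ∈ Finset.range l, c j) * nsq (∏ j ∈ Finset.Icc l (κ - 1), c j) := by
  have hIcc : Finset.Icc l (κ - 1) = Finset.Ico l κ := by
    ext j; simp only [Finset.mem_Icc, Finset.mem_Ico]; omega
  rw [← nsq_mul, hIcc, Finset.prod_range_mul_prod_Ico c hl]

lemma nsq_prod_range_mul_eq_iff {c : ℕ → ℂ} {κ l : ℕ} (hc : ∀ j < κ, c j ≠ 0) (hl : l < κ)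
    (I : ℝ≥0∞) :
    nsq (∏ j ∈ Finset.range κ, c j) * I = nsq (∏ j ∈ Finset.Icc l (κ - 1), c j) ↔
      nsq (∏ j ∈ Finset.range l, c j) * I = 1 := by
  have hQ : nsq (∏ j ∈ Finset.Icc l (κ - 1), c j) ≠ 0 :=
    nsq_ne_zero (Finset.prod_ne_zero_iff.2 fun j hj => hc j (by simp at hj; omega))
  conv_lhs => rw [nsq_prod_range_eq_mul c hl.le (by omega), mul_comm (nsq _), mul_assoc]
  conv_lhs => rhs; rw [← mul_one (nsq _)]
  exact ENNReal.mul_right_inj hQ ENNReal.ofReal_ne_top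

namespace ENNReal

lemma pow_mul_inv_pow_sub {x : ℝ≥0∞} (hx : x ≠ ∞) {n m : ℕ} (hn : n ≠ 0) (h : n ≤ m) :
    x ^ m * (x ^ (m - n))⁻¹ = x ^ n := by
  rcases eq_or_ne x 0 with rfl | hx0
  · rw [zero_pow hn, zero_pow (by omega), zero_mul]
  · rw [← Nat.add_sub_of_le h, pow_add, Nat.add_sub_cancel_left, mul_assoc,
      ENNReal.mul_inv_cancel (pow_ne_zero _ hx0) (pow_ne_top hx), mul_one]

lemma pow_mul_inv_pow_succ {x : ℝ≥0∞} (hx0 : x ≠ 0) (hx : x ≠ ∞) (n : ℕ) :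
    x ^ n * (x ^ (n + 1))⁻¹ = x⁻¹ := by
  rw [pow_succ, ENNReal.mul_inv (Or.inl (pow_ne_zero _ hx0)) (Or.inl (pow_ne_top hx)),
    ← mul_assoc, ENNReal.mul_inv_cancel (pow_ne_zero _ hx0) (pow_ne_top hx), one_mul]

lemma inv_mul_inv_pow (x : ℝ≥0∞) (n : ℕ) : x⁻¹ * (x ^ n)⁻¹ = (x ^ (n + 1))⁻¹ := by
  rw [ENNReal.inv_pow, ENNReal.inv_pow, pow_succ']

end ENNReal

lemma ae_pos_of_invMom_one_ne_top {ρ : Measure ℝ} (h : invMom ρ 1 ≠ ∞) : ∀ᵐ s ∂ρ, 0 < s := by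
  simp only [invMom, pow_one] at h
  filter_upwards [ae_lt_top (by fun_prop) h] with s hs
  simpa using hs

section DensityIdentity

variable {ν ρ : Measure ℝ} {K : ℝ≥0∞} {κ : ℕ}

lemma withDensity_pow_eq_iff_forall_powMomOn :
    ν.withDensity (fun s => ENNReal.ofReal s ^ κ) =
        K • ρ.withDensity (fun s => (ENNReal.ofReal s)⁻¹) ↔
      ∀ σ, MeasurableSet σ → powMomOn ν κ σ = K * invMomOn ρ 1 σ := by
  refine Measure.ext_iff.trans (forall₂_congr fun σ hσ => ?_)
  rw [Measure.smul_apply, withDensity_apply _ hσ, withDensity_apply _ hσ, smul_eq_mul, powMomOn,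
    invMomOn]
  simp only [pow_one]

variable (h : ν.withDensity (fun s => ENNReal.ofReal s ^ κ) =
  K • ρ.withDensity (fun s => (ENNReal.ofReal s)⁻¹))
include h

lemma lintegral_pow_mul_of_withDensity_eq {g : ℝ → ℝ≥0∞} (hg : Measurable g) :
    ∫⁻ s, ENNReal.ofReal s ^ κ * g s ∂ν = K * ∫⁻ s, (ENNReal.ofReal s)⁻¹ * g s ∂ρ := by
  have hν := lintegral_withDensity_eq_lintegral_mul ν
    (f := fun s => ENNReal.ofReal s ^ κ) (by fun_prop) hg
  rw [h, lintegral_smul_measure, lintegral_withDensity_eq_lintegral_mul ρ (by fun_prop) hg] at hν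
  exact hν.symm

lemma powMom_of_withDensity_eq {n : ℕ} (hn : n ≠ 0) (hnκ : n ≤ κ) :
    powMom ν n = K * invMom ρ (κ - n + 1) := by
  calc powMom ν n = ∫⁻ s, ENNReal.ofReal s ^ κ * (ENNReal.ofReal s ^ (κ - n))⁻¹ ∂ν := by
        simp only [powMom, ENNReal.pow_mul_inv_pow_sub ENNReal.ofReal_ne_top hn hnκ]
    _ = K * invMom ρ (κ - n + 1) := by
        rw [lintegral_pow_mul_of_withDensity_eq h (by fun_prop)]
        simp only [invMom, ENNReal.inv_mul_inv_pow]

lemma mul_invMom_le_of_withDensity_eq : K * invMom ρ (κ + 1) ≤ ν univ := by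
  calc K * invMom ρ (κ + 1) = ∫⁻ s, ENNReal.ofReal s ^ κ * (ENNReal.ofReal s ^ κ)⁻¹ ∂ν := by
        rw [lintegral_pow_mul_of_withDensity_eq h (by fun_prop)]
        simp only [invMom, ENNReal.inv_mul_inv_pow]
    _ ≤ ∫⁻ _, 1 ∂ν := lintegral_mono fun s => ENNReal.mul_inv_le_one _
    _ = ν univ := lintegral_one

end DensityIdentity

lemma powMom_eq_iff_of_withDensity_eq {ν ρ : Measure ℝ} {c : ℕ → ℂ} {κ : ℕ} (hκ : 1 ≤ κ)
    (hc : ∀ j < κ, c j ≠ 0)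
    (h : ν.withDensity (fun s => ENNReal.ofReal s ^ κ) =
      nsq (∏ j ∈ Finset.range κ, c j) • ρ.withDensity (fun s => (ENNReal.ofReal s)⁻¹)) :
    (∀ n : ℕ, 1 ≤ n → n ≤ κ →
        powMom ν n = ENNReal.ofReal (‖∏ j ∈ Finset.Icc (κ - n) (κ - 1), c j‖ ^ 2)) ↔
      invMom ρ 1 = 1 ∧ ∀ l : ℕ, 1 ≤ l → l ≤ κ - 1 →
        nsq (∏ j ∈ Finset.range l, c j) * invMom ρ (l + 1) = 1 := by
  have hmom : ∀ n, 1 ≤ n → n ≤ κ → (powMom ν n =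
      ENNReal.ofReal (‖∏ j ∈ Finset.Icc (κ - n) (κ - 1), c j‖ ^ 2) ↔
        nsq (∏ j ∈ Finset.range (κ - n), c j) * invMom ρ (κ - n + 1) = 1) := fun n hn hnκ => by
    rw [powMom_of_withDensity_eq h (by omega) hnκ]
    exact nsq_prod_range_mul_eq_iff hc (by omega) _
  constructor
  · intro H
    refine ⟨?_, fun l hl hlκ => ?_⟩
    · simpa using (hmom κ hκ le_rfl).1 (H κ hκ le_rfl)
    · simpa [Nat.sub_sub_self (by omega : l ≤ κ)] using
        (hmom (κ - l) (by omega) (by omega)).1 (H _ (by omega) (by omega))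
  · rintro ⟨h1, hl⟩ n hn hnκ
    refine (hmom n hn hnκ).2 ?_
    rcases Nat.eq_zero_or_pos (κ - n) with h0 | hpos
    · simpa [h0] using h1
    · exact hl _ hpos (by omega)

/-- The candidate for `ν` in (B): on `(0, ∞)` it is forced by `s^κ dν = K s⁻¹ dρ`, and the atom at
`0`, invisible to `s^κ dν`, brings the total mass up to `1`. -/
def completedMeasure (ρ : Measure ℝ) (K : ℝ≥0∞) (κ : ℕ) : Measure ℝ :=
  K • ρ.withDensity (fun s => (ENNReal.ofReal s ^ (κ + 1))⁻¹) +
    (1 - K * invMom ρ (κ + 1)) • Measure.dirac 0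

section CompletedMeasure

variable {ρ : Measure ℝ} {K : ℝ≥0∞} {κ : ℕ}

lemma isProbOnRplus_completedMeasure (hK : K * invMom ρ (κ + 1) ≤ 1) (hρ : ∀ᵐ s ∂ρ, 0 < s) :
    IsProbOnRplus (completedMeasure ρ K κ) := by
  refine ⟨⟨?_⟩, ?_⟩
  · simp only [completedMeasure, Measure.add_apply, Measure.smul_apply, smul_eq_mul,
      withDensity_apply _ MeasurableSet.univ, Measure.restrict_univ, measure_univ, mul_one]
    exact add_tsub_cancel_of_le hK
  · have hρ0 : ρ.restrict (Iio 0) = 0 := by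
      rw [Measure.restrict_eq_zero]
      exact measure_mono_null (fun s hs => not_lt.2 (le_of_lt hs)) (ae_iff.1 hρ)
    simp [completedMeasure, withDensity_apply _ measurableSet_Iio, hρ0]

lemma withDensity_completedMeasure (hκ : κ ≠ 0) (hρ : ∀ᵐ s ∂ρ, 0 < s) :
    (completedMeasure ρ K κ).withDensity (fun s => ENNReal.ofReal s ^ κ) =
      K • ρ.withDensity (fun s => (ENNReal.ofReal s)⁻¹) := by
  have hdirac : (Measure.dirac (0 : ℝ)).withDensity (fun s => ENNReal.ofReal s ^ κ) = 0 := by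
    rw [← withDensity_zero (μ := Measure.dirac (0 : ℝ))]
    refine withDensity_congr_ae ?_
    rw [Filter.EventuallyEq, ae_dirac_eq, Filter.eventually_pure]
    simp [hκ]
  have hρ' : (ρ.withDensity fun s => (ENNReal.ofReal s ^ (κ + 1))⁻¹).withDensity
      (fun s => ENNReal.ofReal s ^ κ) = ρ.withDensity (fun s => (ENNReal.ofReal s)⁻¹) := by
    rw [← withDensity_mul _ (by fun_prop) (by fun_prop)]
    refine withDensity_congr_ae (hρ.mono fun s hs => ?_)
    rw [Pi.mul_apply, mul_comm]
    exact ENNReal.pow_mul_inv_pow_succ (by simpa using hs) ENNReal.ofReal_ne_top κ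
  rw [completedMeasure, withDensity_add_measure, withDensity_smul_measure, withDensity_smul_measure,
    hdirac, hρ', smul_zero, add_zero]

end CompletedMeasure

theorem conditions_equiv_of_measure {κ : ℕ} (hκ : 1 ≤ κ) {c : ℕ → ℂ} (hc : ∀ j < κ, c j ≠ 0)
    (ρ : Measure ℝ) :
    (invMom ρ 1 = 1 ∧
      (∀ l : ℕ, 1 ≤ l → l ≤ κ - 1 → nsq (∏ j ∈ Finset.range l, c j) * invMom ρ (l + 1) = 1) ∧
      nsq (∏ j ∈ Finset.range κ, c j) * invMom ρ (κ + 1) ≤ 1) ↔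
    ∃ ν : Measure ℝ, IsProbOnRplus ν ∧
      (∀ n : ℕ, 1 ≤ n → n ≤ κ →
        powMom ν n = ENNReal.ofReal (‖∏ j ∈ Finset.Icc (κ - n) (κ - 1), c j‖ ^ 2)) ∧
      ∀ σ : Set ℝ, MeasurableSet σ →
        powMomOn ν κ σ = nsq (∏ j ∈ Finset.range κ, c j) * invMomOn ρ 1 σ := by
  constructor
  · rintro ⟨h1, hl, hle⟩
    have hρ := ae_pos_of_invMom_one_ne_top (h1 ▸ one_ne_top)
    have hW := withDensity_completedMeasure (K := nsq (∏ j ∈ Finset.range κ, c j))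
      (Nat.one_le_iff_ne_zero.1 hκ) hρ
    exact ⟨completedMeasure ρ _ κ, isProbOnRplus_completedMeasure hle hρ,
      (powMom_eq_iff_of_withDensity_eq hκ hc hW).2 ⟨h1, hl⟩,
      withDensity_pow_eq_iff_forall_powMomOn.1 hW⟩
  · rintro ⟨ν, ⟨hν, -⟩, hmom, hset⟩
    have hW := withDensity_pow_eq_iff_forall_powMomOn.2 hset
    obtain ⟨h1, hl⟩ := (powMom_eq_iff_of_withDensity_eq hκ hc hW).1 hmom
    exact ⟨h1, hl, (mul_invMom_le_of_withDensity_eq hW).trans prob_le_one⟩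

theorem ekConditions_equiv_general
    (η : ℕ∞) (κ : ℕ) (hκ : 1 ≤ κ)
    (a : Jt η → ℂ)
    (c : ℕ → ℂ) (hc : ∀ j : ℕ, j < κ → c j ≠ 0)
    (μ : Jt η → Measure ℝ) :
    ((∑' i : Jt η, nsq (a i) * invMom (μ i) 1) = 1 ∧
      (∀ l : ℕ, 1 ≤ l → l ≤ κ - 1 →
        nsq (∏ j ∈ Finset.range l, c j) * ∑' i : Jt η, nsq (a i) * invMom (μ i) (l + 1) = 1) ∧
      nsq (∏ j ∈ Finset.range κ, c j) *
        ∑' i : Jt η, nsq (a i) * invMom (μ i) (κ + 1) ≤ 1) ↔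
    (∃ ν : Measure ℝ, IsProbOnRplus ν ∧
      (∀ n : ℕ, 1 ≤ n → n ≤ κ →
        powMom ν n = ENNReal.ofReal (‖∏ j ∈ Finset.Icc (κ - n) (κ - 1), c j‖ ^ 2)) ∧
      ∀ σ : Set ℝ, MeasurableSet σ →
        powMomOn ν κ σ = nsq (∏ j ∈ Finset.range κ, c j) *
          ∑' i : Jt η, nsq (a i) * invMomOn (μ i) 1 σ) := by
  simp only [tsum_mul_invMom, tsum_mul_invMomOn]
  exact conditions_equiv_of_measure hκ hc _

/-- equivalence of conditions (ii) and (iii). -/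
theorem ekConditions_equiv
    (η : ℕ∞) (hη : 2 ≤ η) (κ : ℕ) (hκ : 1 ≤ κ)
    (a : Jt η → ℂ) (ha : ∀ i, a i ≠ 0)
    (c : ℕ → ℂ) (hc : ∀ j : ℕ, j < κ → c j ≠ 0)
    (μ : Jt η → Measure ℝ) (hμ : ∀ i, IsProbOnRplus (μ i)) :
    ((∑' i : Jt η, nsq (a i) * invMom (μ i) 1) = 1 ∧
      (∀ l : ℕ, 1 ≤ l → l ≤ κ - 1 →
        nsq (∏ j ∈ Finset.range l, c j) * ∑' i : Jt η, nsq (a i) * invMom (μ i) (l + 1) = 1) ∧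
      nsq (∏ j ∈ Finset.range κ, c j) *
        ∑' i : Jt η, nsq (a i) * invMom (μ i) (κ + 1) ≤ 1) ↔
    (∃ ν : Measure ℝ, IsProbOnRplus ν ∧
      (∀ n : ℕ, 1 ≤ n → n ≤ κ →
        powMom ν n = ENNReal.ofReal (‖∏ j ∈ Finset.Icc (κ - n) (κ - 1), c j‖ ^ 2)) ∧
      ∀ σ : Set ℝ, MeasurableSet σ →
        powMomOn ν κ σ = nsq (∏ j ∈ Finset.range κ, c j) *
          ∑' i : Jt η, nsq (a i) * invMomOn (μ i) 1 σ) :=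
  ekConditions_equiv_general η κ hκ a c hc μ
end
end
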